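/- Let n ≥ 1, R = ℝ⟦t⟧, M = Fin (2n) → R with the standard symplectic R-bilinear form Ω_R, and let A : M → End_R(M) be R-linear with Ω_R(A(X)Y,Z) totally symmetric and A(X)∘A(Y) = 0 for all X,Y ∈ M. Define ψ_A : M → M by ψ_A(x) = x − ½·A(x)x. Then: (1) ψ_{−A} ∘ ψ_A = id_M and ψ_A ∘ ψ_{−A} = id_M; (2) the 'derivative' maps id_M − A(x) are symplectic: Ω_R(Y − A(x)Y, Z − A(x)Z) = Ω_R(Y,Z) for all x,Y,Z ∈ M; and (3) ψ_A carries ∇⁰ to ∇^A = ∇⁰ + A in the sense that for all x,X,Y ∈ M: −A(X)Y + A(X − A(x)X)(Y − A(x)Y) = 0, i.e. the second-derivative identity D²ψ_A(x)(X,Y) + A(Dψ_A(x)X)(Dψ_A(x)Y) = 0 holds with Dψ_A(x) = id − A(x) and D²ψ_A(x)(X,Y) = −A(X)Y. -/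

import Mathlib

noncomputable section

/-- The standard symplectic `R`-bilinear form on `M = Fin (2n) → R`, `R = ℝ⟦t⟧`. -/
def OmegaR (n : ℕ) (x y : Fin (2*n) → PowerSeries ℝ) : PowerSeries ℝ :=
  ∑ i : Fin n, (x ⟨i.1, by have := i.isLt; omega⟩ * y ⟨n + i.1, by have := i.isLt; omega⟩
    - x ⟨n + i.1, by have := i.isLt; omega⟩ * y ⟨i.1, by have := i.isLt; omega⟩)

/-- The formal symplectomorphism `ψ_A(x) = x − ½·A(x)x` associated to an `R`-linear
`A : M → End_R(M)`, `R = ℝ⟦t⟧`. -/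
def psiR (n : ℕ)
    (A : (Fin (2*n) → PowerSeries ℝ) →ₗ[PowerSeries ℝ]
      (Fin (2*n) → PowerSeries ℝ) →ₗ[PowerSeries ℝ] (Fin (2*n) → PowerSeries ℝ))
    (x : Fin (2*n) → PowerSeries ℝ) : Fin (2*n) → PowerSeries ℝ :=
  x - (1/2 : ℝ) • A x x

/-!
Totally symmetric `Ω_R(A(X)Y, Z)` and nondegeneracy of `Ω_R` force `A(X)Y = A(Y)X`, so together
with `A(X) ∘ A(Y) = 0` the bilinear map `A` vanishes as soon as either argument lies in its image.
Hence `A(X - U)(Y - W) = A(X)Y` for `U, W` in the image of `A`, which gives both the inverse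
`ψ_{-A}` (since `A(ψ_A x)(ψ_A x) = A(x)x`) and the transport identity for `∇^A`. The derivative
`id - A(x)` is symplectic because the cross terms `-Ω(A(x)Y, Z) - Ω(Y, A(x)Z)` cancel by the
symmetry of `Ω(A(x)·, ·)` and the skewness of `Ω`, while `Ω(A(x)Y, A(x)Z) = Ω(A(x)(A(x)Z), Y) = 0`.
-/

section BilinearSquareZero

variable {R V : Type*} [CommRing R] [AddCommGroup V] [Module R V] {B : V →ₗ[R] V →ₗ[R] V}

lemma apply_sub_apply_sub_apply (hl : ∀ X Y Z, B X (B Y Z) = 0) (hr : ∀ X Y Z, B (B X Y) Z = 0)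
    (X Y a b c d : V) : B (X - B a b) (Y - B c d) = B X Y := by
  simp [hl, hr]

lemma sub_smul_apply_self_leftInverse (hl : ∀ X Y Z, B X (B Y Z) = 0)
    (hr : ∀ X Y Z, B (B X Y) Z = 0) (c : R) :
    Function.LeftInverse (fun y => y - c • (-B) y y) (fun x => x - c • B x x) := by
  intro x
  dsimp only
  rw [← LinearMap.map_smul₂, LinearMap.neg_apply, LinearMap.neg_apply,
    apply_sub_apply_sub_apply hl hr]
  simp

end BilinearSquareZero

section OmegaR

variable {n : ℕ}

lemma OmegaR_sub_left (x y z : Fin (2*n) → PowerSeries ℝ) :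
    OmegaR n (x - y) z = OmegaR n x z - OmegaR n y z := by
  simp only [OmegaR, ← Finset.sum_sub_distrib, Pi.sub_apply]
  exact Finset.sum_congr rfl fun _ _ => by ring

lemma OmegaR_sub_right (x y z : Fin (2*n) → PowerSeries ℝ) :
    OmegaR n x (y - z) = OmegaR n x y - OmegaR n x z := by
  simp only [OmegaR, ← Finset.sum_sub_distrib, Pi.sub_apply]
  exact Finset.sum_congr rfl fun _ _ => by ring

lemma OmegaR_eq_neg_swap (x y : Fin (2*n) → PowerSeries ℝ) :
    OmegaR n x y = -OmegaR n y x := by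
  simp only [OmegaR, ← Finset.sum_neg_distrib]
  exact Finset.sum_congr rfl fun _ _ => by ring

lemma OmegaR_zero_left (y : Fin (2*n) → PowerSeries ℝ) : OmegaR n 0 y = 0 := by
  simp [OmegaR]

lemma OmegaR_single_high (v : Fin (2*n) → PowerSeries ℝ) (i : Fin n) :
    OmegaR n v (Pi.single ⟨n + i, by omega⟩ 1) = v ⟨i, by omega⟩ := by
  rw [OmegaR, Finset.sum_eq_single i]
  · simp [Fin.ext_iff, i.pos.ne']
  · intro k _ hk
    simp [Pi.single_apply, Fin.ext_iff, Fin.val_ne_of_ne hk]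
    omega
  · simp

lemma OmegaR_single_low (v : Fin (2*n) → PowerSeries ℝ) (i : Fin n) :
    OmegaR n v (Pi.single ⟨i, by omega⟩ 1) = -v ⟨n + i, by omega⟩ := by
  rw [OmegaR, Finset.sum_eq_single i]
  · simp [Fin.ext_iff, i.pos.ne']
  · intro k _ hk
    simp [Pi.single_apply, Fin.ext_iff, Fin.val_ne_of_ne hk]
    omega
  · simp

lemma eq_zero_of_OmegaR_eq_zero {v : Fin (2*n) → PowerSeries ℝ}
    (h : ∀ z, OmegaR n v z = 0) : v = 0 := by
  funext ⟨j, hj⟩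
  rcases lt_or_ge j n with hlt | hge
  · simpa using (OmegaR_single_high v ⟨j, hlt⟩).symm.trans (h _)
  · obtain ⟨i, rfl⟩ := Nat.exists_eq_add_of_le hge
    simpa using (OmegaR_single_low v ⟨i, by omega⟩).symm.trans (h _)

variable {A : (Fin (2*n) → PowerSeries ℝ) →ₗ[PowerSeries ℝ]
  (Fin (2*n) → PowerSeries ℝ) →ₗ[PowerSeries ℝ] (Fin (2*n) → PowerSeries ℝ)}

lemma apply_comm_of_OmegaR_apply_comm (hsym : ∀ X Y Z, OmegaR n (A X Y) Z = OmegaR n (A Y X) Z)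
    (X Y : Fin (2*n) → PowerSeries ℝ) : A X Y = A Y X :=
  sub_eq_zero.mp <| eq_zero_of_OmegaR_eq_zero fun Z => by rw [OmegaR_sub_left, hsym, sub_self]

lemma OmegaR_sub_apply_sub_apply (hsym : ∀ X Y Z, OmegaR n (A X Y) Z = OmegaR n (A X Z) Y)
    (hnil : ∀ X Y Z, A X (A Y Z) = 0) (x Y Z : Fin (2*n) → PowerSeries ℝ) :
    OmegaR n (Y - A x Y) (Z - A x Z) = OmegaR n Y Z := by
  have hsquare : OmegaR n (A x Y) (A x Z) = 0 := by
    rw [hsym, hnil, OmegaR_zero_left]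
  have hcross : OmegaR n Y (A x Z) = -OmegaR n (A x Y) Z := by
    rw [OmegaR_eq_neg_swap Y, hsym x Z Y]
  rw [OmegaR_sub_left, OmegaR_sub_right, OmegaR_sub_right, hsquare, hcross]
  ring

lemma psiR_neg_psiR (hl : ∀ X Y Z, A X (A Y Z) = 0) (hr : ∀ X Y Z, A (A X Y) Z = 0)
    (x : Fin (2*n) → PowerSeries ℝ) : psiR n (-A) (psiR n A x) = x := by
  simp only [psiR, ← algebraMap_smul (PowerSeries ℝ) (1/2 : ℝ)]
  exact sub_smul_apply_self_leftInverse hl hr _ x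

end OmegaR

theorem psiR_formal_symplectomorphism_general (n : ℕ)
    (A : (Fin (2*n) → PowerSeries ℝ) →ₗ[PowerSeries ℝ]
      (Fin (2*n) → PowerSeries ℝ) →ₗ[PowerSeries ℝ] (Fin (2*n) → PowerSeries ℝ))
    (hsym₁ : ∀ X Y Z, OmegaR n (A X Y) Z = OmegaR n (A Y X) Z)
    (hsym₂ : ∀ X Y Z, OmegaR n (A X Y) Z = OmegaR n (A X Z) Y)
    (hnil : ∀ X Y Z, A X (A Y Z) = 0) :
    (∀ x, psiR n (-A) (psiR n A x) = x) ∧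
    (∀ x, psiR n A (psiR n (-A) x) = x) ∧
    (∀ x Y Z, OmegaR n (Y - A x Y) (Z - A x Z) = OmegaR n Y Z) ∧
    (∀ x X Y, -(A X Y) + A (X - A x X) (Y - A x Y) = 0) := by
  have hnil' : ∀ X Y Z, A (A X Y) Z = 0 := fun X Y Z => by
    rw [apply_comm_of_OmegaR_apply_comm hsym₁, hnil]
  refine ⟨psiR_neg_psiR hnil hnil', fun x => ?_, OmegaR_sub_apply_sub_apply hsym₂ hnil,
    fun x X Y => by rw [apply_sub_apply_sub_apply hnil hnil', neg_add_cancel]⟩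
  simpa only [show - -A = A from neg_neg A] using
    psiR_neg_psiR (A := -A) (by simpa using hnil) (by simpa using hnil') x

/-- Over `R = ℝ⟦t⟧`: for `R`-linear `A : M → End_R(M)` with
`Ω_R(A(X)Y,Z)` totally symmetric and `A(X)∘A(Y) = 0`, the map `ψ_A(x) = x − ½A(x)x`
is a bijection with inverse `ψ_{−A}`, its 'derivatives' `id − A(x)` are symplectic, and
`ψ_A` carries `∇⁰` to `∇^A = ∇⁰ + A`. -/
theorem psiR_formal_symplectomorphism (n : ℕ) (hn : 1 ≤ n)
    (A : (Fin (2*n) → PowerSeries ℝ) →ₗ[PowerSeries ℝ]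
      (Fin (2*n) → PowerSeries ℝ) →ₗ[PowerSeries ℝ] (Fin (2*n) → PowerSeries ℝ))
    (hsym₁ : ∀ X Y Z, OmegaR n (A X Y) Z = OmegaR n (A Y X) Z)
    (hsym₂ : ∀ X Y Z, OmegaR n (A X Y) Z = OmegaR n (A X Z) Y)
    (hnil : ∀ X Y Z, A X (A Y Z) = 0) :
    (∀ x, psiR n (-A) (psiR n A x) = x) ∧
    (∀ x, psiR n A (psiR n (-A) x) = x) ∧
    (∀ x Y Z, OmegaR n (Y - A x Y) (Z - A x Z) = OmegaR n Y Z) ∧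
    (∀ x X Y, -(A X Y) + A (X - A x X) (Y - A x Y) = 0) :=
  psiR_formal_symplectomorphism_general n A hsym₁ hsym₂ hnil
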